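/- arXiv:2105.08394 — 2 statements merged into one kernel-verified Lean document; each statement's English description precedes it below -/
import Mathlib

section
/- Let $V_i = V_i^1 \oplus V_i^2$ for $i=1,\dots,d$ with $d\geq 2$, let $T_1 \in V_1^1 \otimes \cdots \otimes V_d^1$ and $T_2 \in V_1^2 \otimes \cdots \otimes V_d^2$. Then the slice rank of $T_1 + T_2$ is at least the slice rank of $T_1$ plus the slice rank of $T_2$. -/
open scoped TensorProduct BigOperators

/-- Slice rank of a tensor in a tensor product of vector spaces. -/
noncomputable def tensorSliceRank (F : Type*) [Field F] {d : ℕ} (V : Fin d → Type*)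
    [∀ i, AddCommGroup (V i)] [∀ i, Module F (V i)] (T : ⨂[F] i, V i) : ℕ :=
  sInf {r | ∃ S : Fin r → ⨂[F] i, V i,
    (∀ j, ∃ i : Fin d, ∃ u : V i,
      S j ∈ Submodule.span F {t | ∃ v : ∀ k, V k, v i = u ∧ t = PiTensorProduct.tprod F v}) ∧
    T = ∑ j, S j}

/-!
Let `T = T₁ + T₂` have a slice decomposition of minimal length `r`, and let `U i ⊆ V i` be
spanned by the vectors its slices use in slot `i`. Then `∑ i, dim U i ≤ r`, and `T` is killed by
every `x₁ ⊗ ⋯ ⊗ x_d` with `x i` vanishing on `U i`. Conversely, a tensor killed by all such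
functionals has slice rank at most `∑ i, dim U i`: expand it in bases extending bases of the
`U i`; the terms with no factor from any `U i` have coefficient zero.

Enlarging `U i₀` by `W₂ i₀` makes these functionals kill the `T₂`-part, so `T₁` is bounded by the
dimensions of `W₁ i₀ ⊓ (U i₀ ⊔ W₂ i₀)` and `W₁ i ⊓ U i` (`i ≠ i₀`); enlarging `U i` by `W₁ i` for
`i ≠ i₀` bounds `T₂` by `W₂ i₀ ⊓ U i₀` and `W₂ i ⊓ (U i ⊔ W₁ i)`. Since
`W₁ i ⊕ W₂ i = V i`, the two dimensions at each slot add up to `dim U i`.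
-/

open Module PiTensorProduct

namespace Module.Basis

variable {K V ι : Type*} [DivisionRing K] [AddCommGroup V] [Module K V] {v : ι → V}

theorem sumExtend_apply_inl (hs : LinearIndependent K v) (i : ι) :
    sumExtend hs (Sum.inl i) = v i := by
  simp only [sumExtend, reindex_apply, coe_extend]; rfl

theorem sumExtend_repr_inr_eq_zero (hs : LinearIndependent K v) {x : V}
    (hx : x ∈ Submodule.span K (Set.range v)) (k) : (sumExtend hs).repr x (Sum.inr k) = 0 := by
  have hv : sumExtend hs ∘ Sum.inl = v := funext (sumExtend_apply_inl hs)
  rw [← hv, Set.range_comp, mem_span_image] at hx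
  by_contra hk
  simpa using hx (Finsupp.mem_support_iff.mpr hk)

end Module.Basis

theorem Module.Dual.exists_ker_le_comp_eq {K W V : Type*} [Field K] [AddCommGroup W] [Module K W]
    [AddCommGroup V] [Module K V] (f : W →ₗ[K] V) {U : Submodule K V} {x : Dual K W}
    (hx : U.comap f ≤ LinearMap.ker x) : ∃ X : Dual K V, U ≤ LinearMap.ker X ∧ X ∘ₗ f = x := by
  have hinj : Function.Injective ((U.comap f).mapQ U f le_rfl) := by
    rw [← LinearMap.ker_eq_bot, Submodule.ker_mapQ, Submodule.mkQ_map_self]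
  obtain ⟨Y, hY⟩ := LinearMap.dualMap_surjective_of_injective hinj ((U.comap f).liftQ x hx)
  refine ⟨Y ∘ₗ U.mkQ, fun u hu => by simp [(Submodule.Quotient.mk_eq_zero U).2 hu], ?_⟩
  ext w
  simpa using congr($hY (Submodule.Quotient.mk w))

section Slices

variable {F : Type*} [Field F] {d : ℕ} {V : Fin d → Type*}
  [∀ i, AddCommGroup (V i)] [∀ i, Module F (V i)]

variable (F V) in
def sliceSpan (i : Fin d) (u : V i) : Submodule F (⨂[F] k, V k) :=
  Submodule.span F {t | ∃ v : ∀ k, V k, v i = u ∧ t = tprod F v}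

theorem tprod_mem_sliceSpan (v : ∀ k, V k) (i : Fin d) : tprod F v ∈ sliceSpan F V i (v i) :=
  Submodule.subset_span ⟨v, rfl, rfl⟩

theorem tensorSliceRank_le_card {ι : Type*} [Fintype ι] (i : ι → Fin d) (u : ∀ j, V (i j))
    {T : ⨂[F] k, V k} (hT : T ∈ ⨆ j, sliceSpan F V (i j) (u j)) :
    tensorSliceRank F V T ≤ Fintype.card ι := by
  obtain ⟨S, hS, rfl⟩ := (Submodule.mem_iSup_iff_exists_finsupp _ T).mp hT
  let e := Fintype.equivFin ι
  refine Nat.sInf_le ⟨fun n => S (e.symm n), fun n => ⟨_, _, hS (e.symm n)⟩, ?_⟩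
  rw [Finsupp.sum_fintype _ _ (fun _ => rfl)]
  exact (e.symm.sum_comp _).symm

theorem exists_minimal_slice_decomposition (hd : 0 < d) (T : ⨂[F] k, V k) :
    ∃ S : Fin (tensorSliceRank F V T) → ⨂[F] k, V k,
      (∀ j, ∃ i u, S j ∈ sliceSpan F V i u) ∧ T = ∑ j, S j := by
  refine Nat.sInf_mem (s := {r | ∃ S : Fin r → ⨂[F] k, V k,
    (∀ j, ∃ i u, S j ∈ sliceSpan F V i u) ∧ T = ∑ j, S j}) ?_
  have hT : T ∈ Submodule.span F (Set.range (PiTensorProduct.tprod F)) := by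
    rw [span_tprod_eq_top]; trivial
  obtain ⟨n, c, t, hsum⟩ := Submodule.mem_span_set'.mp hT
  refine ⟨n, fun j => c j • (t j : ⨂[F] k, V k), fun j => ?_, hsum.symm⟩
  obtain ⟨v, hv⟩ := (t j).2
  exact ⟨⟨0, hd⟩, v ⟨0, hd⟩, Submodule.smul_mem _ _ (hv ▸ tprod_mem_sliceSpan v _)⟩

theorem dualDistrib_tprod_comp_map {W : Fin d → Type*} [∀ i, AddCommGroup (W i)]
    [∀ i, Module F (W i)] (x : ∀ i, Dual F (V i)) (f : ∀ i, W i →ₗ[F] V i) :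
    dualDistrib (⨂ₜ[F] i, x i) ∘ₗ map f = dualDistrib (⨂ₜ[F] i, x i ∘ₗ f i) := by
  ext v
  simp

theorem dualDistrib_tprod_coord {κ : Fin d → Type*} (b : ∀ i, Basis (κ i) F (V i))
    (s : ∀ i, κ i) :
    dualDistrib (⨂ₜ[F] i, (b i).coord (s i)) = (Basis.piTensorProduct b).coord s := by
  ext v
  simp [Basis.piTensorProduct_repr_tprod_apply]

theorem dualDistrib_tprod_apply_eq_zero {x : ∀ i, Dual F (V i)} {i : Fin d} {u : V i}
    (hx : x i u = 0) {S : ⨂[F] k, V k} (hS : S ∈ sliceSpan F V i u) :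
    dualDistrib (⨂ₜ[F] k, x k) S = 0 := by
  refine (Submodule.span_le (p := LinearMap.ker _)).mpr ?_ hS
  rintro _ ⟨v, rfl, rfl⟩
  simpa using Finset.prod_eq_zero (Finset.mem_univ i) hx

/-- Dual description of `∑ i, V 0 ⊗ ⋯ ⊗ U i ⊗ ⋯ ⊗ V (d - 1)`. -/
noncomputable def sliceSubmodule (U : ∀ i, Submodule F (V i)) : Submodule F (⨂[F] i, V i) :=
  ⨅ (x : ∀ i, Dual F (V i)) (_ : ∀ i, U i ≤ LinearMap.ker (x i)),
    LinearMap.ker (dualDistrib (⨂ₜ[F] i, x i))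

theorem mem_sliceSubmodule {U : ∀ i, Submodule F (V i)} {T : ⨂[F] i, V i} :
    T ∈ sliceSubmodule U ↔
      ∀ x : ∀ i, Dual F (V i), (∀ i, U i ≤ LinearMap.ker (x i)) →
        dualDistrib (⨂ₜ[F] i, x i) T = 0 := by
  simp [sliceSubmodule, Submodule.mem_iInf]

theorem sliceSubmodule_mono {U U' : ∀ i, Submodule F (V i)} (h : ∀ i, U i ≤ U' i) :
    sliceSubmodule U ≤ sliceSubmodule U' := fun _ hT =>
  mem_sliceSubmodule.mpr fun x hx => mem_sliceSubmodule.mp hT x fun i => (h i).trans (hx i)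

variable {W : Fin d → Type*} [∀ i, AddCommGroup (W i)] [∀ i, Module F (W i)]

theorem map_mem_sliceSubmodule {U : ∀ i, Submodule F (V i)} (f : ∀ i, W i →ₗ[F] V i) {i : Fin d}
    (hi : LinearMap.range (f i) ≤ U i) (t : ⨂[F] i, W i) : map f t ∈ sliceSubmodule U := by
  refine mem_sliceSubmodule.mpr fun x hx => ?_
  have hxf : x i ∘ₗ f i = 0 := LinearMap.range_le_ker_iff.mp (hi.trans (hx i))
  rw [← LinearMap.comp_apply, dualDistrib_tprod_comp_map, MultilinearMap.map_coord_zero _ i hxf,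
    map_zero, LinearMap.zero_apply]

theorem mem_sliceSubmodule_comap_of_map_mem {U : ∀ i, Submodule F (V i)} (f : ∀ i, W i →ₗ[F] V i)
    {t : ⨂[F] i, W i} (ht : map f t ∈ sliceSubmodule U) :
    t ∈ sliceSubmodule fun i => (U i).comap (f i) := by
  refine mem_sliceSubmodule.mpr fun x hx => ?_
  choose X hXU hXf using fun i => Dual.exists_ker_le_comp_eq (f i) (hx i)
  have := mem_sliceSubmodule.mp ht X hXU
  rwa [← LinearMap.comp_apply, dualDistrib_tprod_comp_map, funext hXf] at this

theorem exists_mem_sliceSubmodule_sum_finrank_le (hd : 0 < d) (T : ⨂[F] i, V i) :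
    ∃ U : ∀ i, Submodule F (V i),
      T ∈ sliceSubmodule U ∧ ∑ i, finrank F (U i) ≤ tensorSliceRank F V T := by
  obtain ⟨S, hS, hT⟩ := exists_minimal_slice_decomposition hd T
  choose i u hu using hS
  let U k := Submodule.span F (Set.range fun j : {j // i j = k} => (j.2 ▸ u j : V k))
  have huU : ∀ j, u j ∈ U (i j) := fun j => Submodule.subset_span ⟨⟨j, rfl⟩, rfl⟩
  refine ⟨U, mem_sliceSubmodule.mpr fun x hx => ?_, ?_⟩
  · rw [hT, map_sum]
    exact Finset.sum_eq_zero fun j _ => dualDistrib_tprod_apply_eq_zero (hx _ (huU j)) (hu j)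
  · calc ∑ k, finrank F (U k) ≤ ∑ k, Fintype.card {j // i j = k} :=
          Finset.sum_le_sum fun k _ => finrank_range_le_card _
      _ = tensorSliceRank F V T := by
          rw [← Fintype.card_sigma, Fintype.card_congr (Equiv.sigmaFiberEquiv i), Fintype.card_fin]

theorem tensorSliceRank_le_sum_finrank [∀ i, FiniteDimensional F (V i)]
    {A : ∀ i, Submodule F (V i)} {T : ⨂[F] i, V i} (hT : T ∈ sliceSubmodule A) :
    tensorSliceRank F V T ≤ ∑ i, finrank F (A i) := by
  classical
  let a i := finBasis F (A i)
  have ha : ∀ i, LinearIndependent F ((A i).subtype ∘ a i) := fun i =>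
    (a i).linearIndependent.map' _ (A i).ker_subtype
  have hspan : ∀ i, Submodule.span F (Set.range ((A i).subtype ∘ a i)) = A i := fun i => by
    rw [Set.range_comp, Submodule.span_image, (a i).span_eq, Submodule.map_top,
      Submodule.range_subtype]
  let b i := Basis.sumExtend (ha i)
  have := fun i => Module.Finite.finite_basis (b i)
  have := fun i => Fintype.ofFinite (Fin (finrank F (A i)) ⊕ Basis.sumExtendIndex (ha i))
  let B := Basis.piTensorProduct b
  have hcoef : ∀ s, (∀ i k, s i ≠ Sum.inl k) → B.repr T s = 0 := by
    intro s hs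
    have hker : ∀ i, A i ≤ LinearMap.ker ((b i).coord (s i)) := by
      intro i x hx
      rcases h : s i with k | k
      · exact absurd h (hs i k)
      · exact Basis.sumExtend_repr_inr_eq_zero _ ((hspan i).symm ▸ hx) k
    have := mem_sliceSubmodule.mp hT _ hker
    rwa [dualDistrib_tprod_coord] at this
  rw [← B.sum_repr T]
  refine (tensorSliceRank_le_card (ι := Σ i, Fin (finrank F (A i))) (fun j => j.1)
    (fun j => b j.1 (Sum.inl j.2)) (Submodule.sum_mem _ fun s _ => ?_)).trans_eq (by simp)
  rcases em (∃ i k, s i = Sum.inl k) with ⟨i, k, hk⟩ | hs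
  · refine Submodule.smul_mem _ _ (Submodule.mem_iSup_of_mem ⟨i, k⟩ ?_)
    rw [Basis.piTensorProduct_apply]
    convert tprod_mem_sliceSpan (fun i => b i (s i)) i using 2
    rw [hk]
  · rw [hcoef s fun i k h => hs ⟨i, k, h⟩, zero_smul]
    exact zero_mem _

end Slices

theorem finrank_comap_subtype_sup_add_finrank_comap_subtype {K V : Type*} [DivisionRing K]
    [AddCommGroup V] [Module K V] [FiniteDimensional K V] {p q : Submodule K V} (h : IsCompl p q)
    (U : Submodule K V) :
    finrank K ((U ⊔ q).comap p.subtype) + finrank K (U.comap q.subtype) = finrank K U := by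
  have hcomap : ∀ r N : Submodule K V, finrank K (N.comap r.subtype) = finrank K ↥(r ⊓ N) :=
    fun r N => by rw [← Submodule.finrank_map_subtype_eq, Submodule.map_comap_subtype]
  have htop : p ⊔ (U ⊔ q) = ⊤ := top_le_iff.mp (h.sup_eq_top ▸ sup_le_sup_left le_sup_right p)
  have h₁ := Submodule.finrank_sup_add_finrank_inf_eq p (U ⊔ q)
  have h₂ := Submodule.finrank_sup_add_finrank_inf_eq U q
  have h₃ := Submodule.finrank_add_eq_of_isCompl h
  rw [htop, finrank_top] at h₁
  rw [hcomap, hcomap, inf_comm q U]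
  omega

theorem sliceRank_directSum_ge (F : Type*) [Field F] {d : ℕ} (hd : 2 ≤ d)
    (V : Fin d → Type*)
    [∀ i, AddCommGroup (V i)] [∀ i, Module F (V i)] [∀ i, FiniteDimensional F (V i)]
    (W₁ W₂ : ∀ i, Submodule F (V i)) (hcompl : ∀ i, IsCompl (W₁ i) (W₂ i))
    (T₁ : ⨂[F] i, (W₁ i)) (T₂ : ⨂[F] i, (W₂ i)) :
    tensorSliceRank F V
        (PiTensorProduct.map (fun i => (W₁ i).subtype) T₁ +
          PiTensorProduct.map (fun i => (W₂ i).subtype) T₂) ≥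
      tensorSliceRank F (fun i => (W₁ i)) T₁ + tensorSliceRank F (fun i => (W₂ i)) T₂ := by
  obtain ⟨U, hTU, hU⟩ := exists_mem_sliceSubmodule_sum_finrank_le (by omega)
    (map (fun i => (W₁ i).subtype) T₁ + map (fun i => (W₂ i).subtype) T₂)
  let i₀ : Fin d := ⟨0, by omega⟩
  let i₁ : Fin d := ⟨1, by omega⟩
  let U₁ i := if i = i₀ then U i ⊔ W₂ i else U i
  let U₂ i := if i = i₀ then U i else U i ⊔ W₁ i
  have hT₁ : map (fun i => (W₁ i).subtype) T₁ ∈ sliceSubmodule U₁ := by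
    refine (Submodule.add_mem_iff_left _ (map_mem_sliceSubmodule _ (i := i₀) ?_ T₂)).mp
      (sliceSubmodule_mono (fun i => ?_) hTU)
    · simp [U₁]
    · dsimp only [U₁]; split_ifs <;> simp
  have hT₂ : map (fun i => (W₂ i).subtype) T₂ ∈ sliceSubmodule U₂ := by
    refine (Submodule.add_mem_iff_right _ (map_mem_sliceSubmodule _ (i := i₁) ?_ T₁)).mp
      (sliceSubmodule_mono (fun i => ?_) hTU)
    · simp [U₂, i₀, i₁]
    · dsimp only [U₂]; split_ifs <;> simp
  calc tensorSliceRank F (fun i => W₁ i) T₁ + tensorSliceRank F (fun i => W₂ i) T₂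
      ≤ ∑ i, finrank F ((U₁ i).comap (W₁ i).subtype)
          + ∑ i, finrank F ((U₂ i).comap (W₂ i).subtype) :=
        add_le_add (tensorSliceRank_le_sum_finrank (mem_sliceSubmodule_comap_of_map_mem _ hT₁))
          (tensorSliceRank_le_sum_finrank (mem_sliceSubmodule_comap_of_map_mem _ hT₂))
    _ = ∑ i, finrank F (U i) := by
        rw [← Finset.sum_add_distrib]
        refine Finset.sum_congr rfl fun i _ => ?_
        by_cases hi : i = i₀
        · rw [show U₁ i = U i ⊔ W₂ i from if_pos hi, show U₂ i = U i from if_pos hi]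
          exact finrank_comap_subtype_sup_add_finrank_comap_subtype (hcompl i) (U i)
        · rw [show U₁ i = U i from if_neg hi, show U₂ i = U i ⊔ W₁ i from if_neg hi, add_comm]
          exact finrank_comap_subtype_sup_add_finrank_comap_subtype (hcompl i).symm (U i)
    _ ≤ _ := hU
end

section
/- Let $d \geq 2$ and $k \geq 1$, let $V_i = V_i^1 \oplus \cdots \oplus V_i^k$ for $i=1,\dots,d$ be finite-dimensional vector spaces, and let $T \in V_1 \otimes \cdots \otimes V_d$ be block upper triangular, meaning the component $T^\alpha \in V_1^{\alpha_1} \otimes \cdots \otimes V_d^{\alpha_d}$ is nonzero only for weakly increasing sequences $\alpha \in [k]^d$. Then $\sigma(T) \geq \sigma(T^{(1,\dots,1)}) + \sigma(T^{(2,\dots,2)}) + \cdots + \sigma(T^{(k,\dots,k)})$. -/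
/-!
Take subspaces `A i ≤ V i` with `∑ i, dim A i = σ(T)` such that `T` lies in the sum over `i` of
the spans of pure tensors whose `i`-th factor is in `A i`. For a diagonal index `j`, let `G i j` be
`A i` plus the blocks below `j`, except in the last factor, where the blocks above `j` are used.
The map `⨂ (V i → V i ⧸ G i j)` kills `T`, and it kills every off-diagonal block because a
monotone `α ≠ (j,…,j)` has `α i < j` for some non-last `i` or `α last > j`; hence it kills
`T^(j,…,j)`. Over a field the kernel of `map f` is the sum of the slice spans of the kernels
`ker (f i)`, so `σ(T^(j,…,j)) ≤ ∑ i, dim (V_i^j ⊓ G i j)`, and along the flag of partial sums of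
blocks these dimensions add up over `j` to at most `dim A i`.
-/

open scoped TensorProduct BigOperators

theorem LinearMap.exists_comp_comp_eq_self {K V Z : Type*} [DivisionRing K]
    [AddCommGroup V] [Module K V] [AddCommGroup Z] [Module K Z] (f : V →ₗ[K] Z) :
    ∃ g : Z →ₗ[K] V, f ∘ₗ g ∘ₗ f = f := by
  obtain ⟨s, hs⟩ := f.rangeRestrict.exists_rightInverse_of_surjective f.range_rangeRestrict
  obtain ⟨t, ht⟩ := (LinearMap.range f).subtype.exists_leftInverse_of_injective
    (Submodule.ker_subtype _)
  refine ⟨s ∘ₗ t, ?_⟩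
  ext v
  have h1 : t (f v) = f.rangeRestrict v := LinearMap.congr_fun ht (f.rangeRestrict v)
  have h2 : ∀ y, f (s y) = y := fun y => congrArg Subtype.val (LinearMap.congr_fun hs y)
  simp [h1, h2]

namespace PiTensorProduct

variable {ι R : Type*} [CommRing R] {V Z : ι → Type*}
  [∀ i, AddCommGroup (V i)] [∀ i, Module R (V i)] [∀ i, AddCommGroup (Z i)] [∀ i, Module R (Z i)]

variable (R) in
def sliceSpan (i : ι) (u : V i) : Submodule R (⨂[R] i, V i) :=
  Submodule.span R {t | ∃ v : ∀ k, V k, v i = u ∧ t = tprod R v}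

variable (R) in
def slices (i : ι) (A : Submodule R (V i)) : Submodule R (⨂[R] i, V i) :=
  Submodule.span R (tprod R '' {v | v i ∈ A})

theorem slices_mono (i : ι) {A B : Submodule R (V i)} (h : A ≤ B) :
    slices R i A ≤ slices R i B :=
  Submodule.span_mono (Set.image_mono fun _ hv => h hv)

theorem sliceSpan_le_slices {i : ι} {u : V i} {A : Submodule R (V i)} (hu : u ∈ A) :
    sliceSpan R i u ≤ slices R i A :=
  Submodule.span_mono fun _ ⟨v, hv, ht⟩ => ⟨v, by simpa [hv] using hu, ht.symm⟩

theorem slices_top (i : ι) : slices R i (⊤ : Submodule R (V i)) = ⊤ := by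
  rw [eq_top_iff, ← span_tprod_eq_top]
  exact Submodule.span_mono fun _ ⟨v, hv⟩ => ⟨v, trivial, hv⟩

theorem slices_span_le (i : ι) (s : Set (V i)) :
    slices R i (Submodule.span R s) ≤ ⨆ u ∈ s, sliceSpan R i u := by
  classical
  refine Submodule.span_le.2 ?_
  rintro _ ⟨v, hv, rfl⟩
  suffices ∀ x ∈ Submodule.span R s,
      tprod R (Function.update v i x) ∈ ⨆ u ∈ s, sliceSpan R i u by
    simpa using this (v i) hv
  intro x hx
  induction hx using Submodule.span_induction with
  | mem u hu => exact Submodule.mem_iSup_of_mem u <| Submodule.mem_iSup_of_mem hu <|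
      Submodule.subset_span ⟨_, by simp, rfl⟩
  | zero => simp
  | add x y _ _ hx hy => rw [MultilinearMap.map_update_add]; exact add_mem hx hy
  | smul c x _ hx => rw [MultilinearMap.map_update_smul]; exact Submodule.smul_mem _ c hx

theorem range_map_le_slices (f : ∀ i, V i →ₗ[R] Z i) (i : ι) :
    LinearMap.range (map f) ≤ slices R i (LinearMap.range (f i)) := by
  rw [LinearMap.range_eq_map, ← span_tprod_eq_top, Submodule.map_span, Submodule.span_le]
  rintro _ ⟨_, ⟨v, rfl⟩, rfl⟩
  exact Submodule.subset_span ⟨fun i => f i (v i), ⟨v i, rfl⟩, (map_tprod f v).symm⟩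

theorem iSup_slices_ker_le_ker_map (f : ∀ i, V i →ₗ[R] Z i) :
    ⨆ i, slices R i (LinearMap.ker (f i)) ≤ LinearMap.ker (map f) := by
  refine iSup_le fun i => Submodule.span_le.2 ?_
  rintro _ ⟨v, hv, rfl⟩
  simpa using MultilinearMap.map_coord_zero _ i (show f i (v i) = 0 from hv)

/-- Expanding `id = p + (id - p)` in every factor, each term other than `map p` has a factor
`id - p i`. -/
theorem mem_iSup_slices_of_map_eq_zero [Fintype ι] (p : ∀ i, V i →ₗ[R] V i)
    {x : ⨂[R] i, V i} (hx : map p x = 0) :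
    x ∈ ⨆ i, slices R i (LinearMap.range (LinearMap.id - p i)) := by
  classical
  have hid : p + (fun i => LinearMap.id - p i) = fun _ => LinearMap.id := by
    funext i; simp
  have hexp := (mapMultilinear R V V).map_add_univ p (fun i => LinearMap.id - p i)
  simp only [hid, mapMultilinear_apply, map_id] at hexp
  rw [← Finset.add_sum_erase _ _ (Finset.mem_univ _), Finset.piecewise_univ] at hexp
  rw [← LinearMap.id_apply (R := R) x, hexp, LinearMap.add_apply, hx, zero_add,
    LinearMap.sum_apply]
  refine Submodule.sum_mem _ fun s hs => ?_
  obtain ⟨i, -, hi⟩ := Finset.exists_of_ssubset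
    (Finset.ssubset_univ_iff.2 (Finset.ne_of_mem_erase hs))
  have hrange := range_map_le_slices _ i (LinearMap.mem_range_self
    (map (s.piecewise p fun i => LinearMap.id - p i)) x)
  rw [Finset.piecewise_eq_of_notMem _ _ _ hi] at hrange
  exact Submodule.mem_iSup_of_mem i hrange

section Field

variable {K : Type*} [Field K] {V Z : ι → Type*}
  [∀ i, AddCommGroup (V i)] [∀ i, Module K (V i)] [∀ i, AddCommGroup (Z i)] [∀ i, Module K (Z i)]

theorem ker_map_eq_iSup_slices [Fintype ι] (f : ∀ i, V i →ₗ[K] Z i) :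
    LinearMap.ker (map f) = ⨆ i, slices K i (LinearMap.ker (f i)) := by
  refine le_antisymm (fun x hx => ?_) (iSup_slices_ker_le_ker_map f)
  choose g hg using fun i => (f i).exists_comp_comp_eq_self
  have hgx : map (fun i => g i ∘ₗ f i) x = 0 := by
    rw [map_comp, LinearMap.comp_apply, LinearMap.mem_ker.1 hx, map_zero]
  refine iSup_mono (fun i => slices_mono i ?_) (mem_iSup_slices_of_map_eq_zero _ hgx)
  rintro _ ⟨v, rfl⟩
  have hv := LinearMap.congr_fun (hg i) v
  simp only [LinearMap.comp_apply] at hv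
  simp [hv]

end Field

end PiTensorProduct

open PiTensorProduct Module

section SliceRank

variable {F : Type*} [Field F] {d : ℕ} {V : Fin d → Type*}
  [∀ i, AddCommGroup (V i)] [∀ i, Module F (V i)]

variable (F) in
def IsSumOfSlices (T : ⨂[F] i, V i) (r : ℕ) : Prop :=
  ∃ S : Fin r → ⨂[F] i, V i, (∀ j, ∃ i, ∃ u : V i, S j ∈ sliceSpan F i u) ∧ T = ∑ j, S j

theorem tensorSliceRank_eq_sInf (T : ⨂[F] i, V i) :
    tensorSliceRank F V T = sInf {r | IsSumOfSlices F T r} :=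
  rfl

theorem isSumOfSlices_sum {κ : Type*} [Fintype κ] (S : κ → ⨂[F] i, V i)
    (hS : ∀ p, ∃ i, ∃ u : V i, S p ∈ sliceSpan F i u) :
    IsSumOfSlices F (∑ p, S p) (Fintype.card κ) :=
  let e := Fintype.equivFin κ
  ⟨S ∘ e.symm, fun _ => hS _, (e.symm.sum_comp S).symm⟩

theorem isSumOfSlices_of_mem_iSup_slices (A : ∀ i, Submodule F (V i))
    [∀ i, FiniteDimensional F (A i)] {T : ⨂[F] i, V i} (hT : T ∈ ⨆ i, slices F i (A i)) :
    IsSumOfSlices F T (∑ i, finrank F (A i)) := by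
  let b := fun i => Module.finBasis F (A i)
  have hA : ∀ i, slices F i (A i) ≤ ⨆ m, sliceSpan F i (b i m : V i) := by
    intro i
    have hspan : Submodule.span F (Set.range fun m => (b i m : V i)) = A i := by
      rw [show (Set.range fun m => (b i m : V i)) = (A i).subtype '' Set.range (b i) from
        Set.range_comp _ _, Submodule.span_image, (b i).span_eq,
        Submodule.map_subtype_top]
    have := slices_span_le (R := F) i (Set.range fun m => (b i m : V i))
    rwa [hspan, iSup_range] at this
  have hT' : T ∈ ⨆ p : Σ i, Fin (finrank F (A i)), sliceSpan F p.1 (b p.1 p.2 : V p.1) := by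
    rw [iSup_sigma]
    exact iSup_mono hA hT
  obtain ⟨f, hf, rfl⟩ := (Submodule.mem_iSup_iff_exists_finsupp _ _).1 hT'
  simpa [Finsupp.sum_fintype, Fintype.card_sigma] using
    isSumOfSlices_sum (fun p => f p) fun p => ⟨_, _, hf p⟩

theorem exists_sum_finrank_le_of_isSumOfSlices {T : ⨂[F] i, V i} {r : ℕ}
    (h : IsSumOfSlices F T r) :
    ∃ A : ∀ i, Submodule F (V i), ∑ i, finrank F (A i) ≤ r ∧ T ∈ ⨆ i, slices F i (A i) := by
  classical
  obtain ⟨S, hS, rfl⟩ := h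
  choose idx u hu using hS
  let p : Fin r → Σ i, V i := fun j => ⟨idx j, u j⟩
  let U : ∀ i, Finset (V i) := fun i =>
    (Finset.univ.image p).preimage (Sigma.mk i) sigma_mk_injective.injOn
  refine ⟨fun i => Submodule.span F (U i), ?_, ?_⟩
  · calc ∑ i, finrank F (Submodule.span F (U i : Set (V i)))
        ≤ ∑ i, (U i).card := Finset.sum_le_sum fun i _ => finrank_span_finset_le_card _
      _ = (Finset.univ.sigma U).card := (Finset.card_sigma _ _).symm
      _ = (Finset.univ.image p).card := by congr 1; ext ⟨i, v⟩; simp [U]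
      _ ≤ r := Finset.card_image_le.trans (by simp)
  · refine Submodule.sum_mem _ fun j _ => Submodule.mem_iSup_of_mem (idx j)
      (sliceSpan_le_slices (Submodule.subset_span ?_) (hu j))
    exact Finset.mem_preimage.2 (Finset.mem_image_of_mem p (Finset.mem_univ j))

theorem exists_sum_finrank_le_tensorSliceRank [∀ i, FiniteDimensional F (V i)] (hd : 0 < d)
    (T : ⨂[F] i, V i) :
    ∃ A : ∀ i, Submodule F (V i),
      ∑ i, finrank F (A i) ≤ tensorSliceRank F V T ∧ T ∈ ⨆ i, slices F i (A i) := by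
  have hT : T ∈ ⨆ i, slices F i (⊤ : Submodule F (V i)) :=
    Submodule.mem_iSup_of_mem ⟨0, hd⟩ (by rw [slices_top]; trivial)
  rw [tensorSliceRank_eq_sInf]
  exact exists_sum_finrank_le_of_isSumOfSlices <|
    Nat.sInf_mem (s := {r | IsSumOfSlices F T r}) ⟨_, isSumOfSlices_of_mem_iSup_slices _ hT⟩

theorem tensorSliceRank_le_of_mem_iSup_slices (A : ∀ i, Submodule F (V i))
    [∀ i, FiniteDimensional F (A i)] {T : ⨂[F] i, V i} (hT : T ∈ ⨆ i, slices F i (A i)) :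
    tensorSliceRank F V T ≤ ∑ i, finrank F (A i) :=
  (tensorSliceRank_eq_sInf T).trans_le (Nat.sInf_le (isSumOfSlices_of_mem_iSup_slices A hT))

theorem tensorSliceRank_le_sum_finrank_ker [∀ i, FiniteDimensional F (V i)]
    {Z : Fin d → Type*} [∀ i, AddCommGroup (Z i)] [∀ i, Module F (Z i)]
    (f : ∀ i, V i →ₗ[F] Z i) {T : ⨂[F] i, V i} (hT : map f T = 0) :
    tensorSliceRank F V T ≤ ∑ i, finrank F (LinearMap.ker (f i)) :=
  tensorSliceRank_le_of_mem_iSup_slices _ (ker_map_eq_iSup_slices f ▸ hT)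

end SliceRank

section Flag

variable {K E : Type*} [Field K] [AddCommGroup E] [Module K E] [FiniteDimensional K E]
  {ι : Type*} [LinearOrder ι]

theorem finrank_sup_iSup_add_sum_finrank_inf (W : ι → Submodule K E) (A : Submodule K E)
    (s : Finset ι) :
    finrank K ↥(A ⊔ ⨆ l ∈ s, W l) +
        ∑ j ∈ s, finrank K ↥(W j ⊓ (A ⊔ ⨆ l ∈ s, ⨆ (_ : l < j), W l)) =
      finrank K A + ∑ j ∈ s, finrank K (W j) := by
  classical
  induction s using Finset.induction_on_max with
  | empty =>
    have : (⨆ l ∈ (∅ : Finset ι), W l) = ⊥ := by simp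
    rw [Finset.sum_empty, Finset.sum_empty, this, sup_bot_eq]
  | insert a s has ih =>
    have ha : a ∉ s := fun h => lt_irrefl a (has a h)
    have hbelow : ∀ j ∈ s,
        (⨆ l ∈ insert a s, ⨆ (_ : l < j), W l) = ⨆ l ∈ s, ⨆ (_ : l < j), W l := fun j hj => by
      rw [Finset.iSup_insert, iSup_neg (has j hj).not_gt, bot_sup_eq]
    have htop : (⨆ l ∈ insert a s, ⨆ (_ : l < a), W l) = ⨆ l ∈ s, W l := by
      rw [Finset.iSup_insert, iSup_neg (lt_irrefl a), bot_sup_eq]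
      exact iSup_congr fun l => iSup_congr fun hl => iSup_pos (has l hl)
    have hsup : A ⊔ ⨆ l ∈ insert a s, W l = W a ⊔ (A ⊔ ⨆ l ∈ s, W l) := by
      rw [Finset.iSup_insert, sup_left_comm]
    have := Submodule.finrank_sup_add_finrank_inf_eq (W a) (A ⊔ ⨆ l ∈ s, W l)
    rw [Finset.sum_insert ha, Finset.sum_insert ha, htop,
      Finset.sum_congr rfl fun j hj => by rw [hbelow j hj], hsup]
    omega

theorem sum_finrank_inf_sup_iSup_lt_le [Fintype ι] {W : ι → Submodule K E} (hW : iSupIndep W)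
    (A : Submodule K E) :
    ∑ j, finrank K ↥(W j ⊓ (A ⊔ ⨆ (l) (_ : l < j), W l)) ≤ finrank K A := by
  have hall : (⨆ l ∈ Finset.univ, W l) = ⨆ l, W l := by simp
  have hlt : ∀ j, (⨆ l ∈ Finset.univ, ⨆ (_ : l < j), W l) = ⨆ (l) (_ : l < j), W l := by simp
  have hdisj : ∀ j, W j ⊓ (⊥ ⊔ ⨆ (l) (_ : l < j), W l) = ⊥ := fun j => by
    rw [bot_sup_eq, ← disjoint_iff]
    exact (hW j).mono_right <| iSup₂_mono' fun l hl => ⟨l, hl.ne, le_rfl⟩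
  have hA := finrank_sup_iSup_add_sum_finrank_inf W A Finset.univ
  have hbot := finrank_sup_iSup_add_sum_finrank_inf W ⊥ Finset.univ
  rw [Finset.sum_congr rfl fun j _ => by rw [hlt j], hall] at hA
  rw [Finset.sum_congr rfl fun j _ => by rw [hlt j, hdisj j, finrank_bot], hall, bot_sup_eq,
    Finset.sum_const_zero, finrank_bot] at hbot
  have := Submodule.finrank_mono (le_sup_right : ⨆ l, W l ≤ A ⊔ ⨆ l, W l)
  omega

end Flag

theorem Monotone.lt_apply_top_or_exists_apply_lt {ι κ : Type*} [PartialOrder ι] [OrderTop ι]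
    [Nontrivial ι] [LinearOrder κ] {α : ι → κ} (hα : Monotone α) {j : κ}
    (hne : α ≠ fun _ => j) : j < α ⊤ ∨ ∃ i ≠ ⊤, α i < j := by
  rcases lt_trichotomy (α ⊤) j with hlt | heq | hgt
  · obtain ⟨i, hi⟩ := exists_ne (⊤ : ι)
    exact Or.inr ⟨i, hi, (hα le_top).trans_lt hlt⟩
  · obtain ⟨i, hi⟩ := Function.ne_iff.1 hne
    refine Or.inr ⟨i, fun h => hi (h ▸ heq), ?_⟩
    exact lt_of_le_of_ne (heq ▸ hα le_top) hi
  · exact Or.inl hgt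

theorem tensorSliceRank_diagonalBlock_le {F : Type*} [Field F] {d : ℕ} {V : Fin d → Type*}
    [∀ i, AddCommGroup (V i)] [∀ i, Module F (V i)] [∀ i, FiniteDimensional F (V i)]
    {κ : Type*} [Fintype κ] (W : ∀ i : Fin d, κ → Submodule F (V i)) {T : ⨂[F] i, V i}
    (Tc : ∀ α : Fin d → κ, ⨂[F] i, W i (α i))
    (hdecomp : T = ∑ α, map (fun i => (W i (α i)).subtype) (Tc α))
    {A G : ∀ i, Submodule F (V i)} (hAG : ∀ i, A i ≤ G i) (hTA : T ∈ ⨆ i, slices F i (A i))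
    (j : κ) (hG : ∀ α ≠ (fun _ => j), Tc α ≠ 0 → ∃ i, W i (α i) ≤ G i) :
    tensorSliceRank F (fun i => W i j) (Tc fun _ => j) ≤ ∑ i, finrank F ↥(W i j ⊓ G i) := by
  classical
  have hT : map (fun i => (G i).mkQ) T = 0 := by
    rw [← LinearMap.mem_ker, ker_map_eq_iSup_slices]
    refine iSup_mono (fun i => slices_mono i ?_) hTA
    rw [Submodule.ker_mkQ]
    exact hAG i
  have hcomp : ∀ α, map (fun i => (G i).mkQ) (map (fun i => (W i (α i)).subtype) (Tc α)) =
      map (fun i => (G i).mkQ ∘ₗ (W i (α i)).subtype) (Tc α) := fun α => by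
    rw [map_comp, LinearMap.comp_apply]
  have hoff : ∀ α ≠ (fun _ => j),
      map (fun i => (G i).mkQ ∘ₗ (W i (α i)).subtype) (Tc α) = 0 := fun α hα => by
    by_cases h0 : Tc α = 0
    · rw [h0, map_zero]
    obtain ⟨i, hi⟩ := hG α hα h0
    have hzero : (G i).mkQ ∘ₗ (W i (α i)).subtype = 0 := by
      ext x
      simpa using hi x.2
    rw [← mapMultilinear_apply, (mapMultilinear F _ _).map_coord_zero i hzero,
      LinearMap.zero_apply]
  rw [hdecomp, map_sum, Finset.sum_eq_single (fun _ => j)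
    (fun α _ hα => (hcomp α).trans (hoff α hα)) (by simp), hcomp] at hT
  refine (tensorSliceRank_le_sum_finrank_ker _ hT).trans_eq (Finset.sum_congr rfl fun i _ => ?_)
  rw [LinearMap.ker_comp, Submodule.ker_mkQ, ← Submodule.finrank_map_subtype_eq,
    Submodule.map_comap_subtype]

theorem sliceRank_blockTriangular_general {F : Type*} [Field F] {d k : ℕ} (hd : 2 ≤ d)
    (V : Fin d → Type*)
    [∀ i, AddCommGroup (V i)] [∀ i, Module F (V i)] [∀ i, FiniteDimensional F (V i)]
    (W : ∀ i : Fin d, Fin k → Submodule F (V i))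
    (hW : ∀ i, DirectSum.IsInternal (W i))
    (T : ⨂[F] i, V i)
    (Tc : ∀ α : Fin d → Fin k, ⨂[F] i, (W i (α i)))
    (hdecomp : T = ∑ α : Fin d → Fin k,
      PiTensorProduct.map (fun i => (W i (α i)).subtype) (Tc α))
    (htri : ∀ α : Fin d → Fin k, ¬ Monotone α → Tc α = 0) :
    tensorSliceRank F V T ≥ ∑ j : Fin k, tensorSliceRank F (fun i => (W i j)) (Tc fun _ => j) := by
  obtain ⟨n, rfl⟩ : ∃ n, d = n + 2 := ⟨d - 2, by omega⟩
  obtain ⟨A, hA, hTA⟩ := exists_sum_finrank_le_tensorSliceRank (Nat.succ_pos _) T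
  let G : ∀ i, Fin k → Submodule F (V i) := fun i j =>
    A i ⊔ if i = ⊤ then ⨆ (l) (_ : j < l), W i l else ⨆ (l) (_ : l < j), W i l
  have hG_top : ∀ j, G ⊤ j = A ⊤ ⊔ ⨆ (l) (_ : j < l), W ⊤ l := fun j => by simp [G]
  have hG_ne : ∀ i ≠ ⊤, ∀ j, G i j = A i ⊔ ⨆ (l) (_ : l < j), W i l := fun i hi j => by
    simp [G, hi]
  have hblock : ∀ j, tensorSliceRank F (fun i => W i j) (Tc fun _ => j) ≤
      ∑ i, finrank F ↥(W i j ⊓ G i j) := fun j =>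
    tensorSliceRank_diagonalBlock_le W Tc hdecomp (fun i => le_sup_left) hTA j fun α hα h0 => by
      have hmono : Monotone α := not_not.1 (mt (htri α) h0)
      rcases hmono.lt_apply_top_or_exists_apply_lt hα with hgt | ⟨i, hi, hlt⟩
      · exact ⟨⊤, (le_sup_of_le_right (le_iSup₂_of_le (α ⊤) hgt le_rfl)).trans (hG_top j).ge⟩
      · exact ⟨i, (le_sup_of_le_right (le_iSup₂_of_le (α i) hlt le_rfl)).trans (hG_ne i hi j).ge⟩
  have hflag : ∀ i, ∑ j, finrank F ↥(W i j ⊓ G i j) ≤ finrank F (A i) := fun i => by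
    rcases eq_or_ne i ⊤ with rfl | hi
    · rw [Finset.sum_congr rfl fun j _ => by rw [hG_top j]]
      exact sum_finrank_inf_sup_iSup_lt_le (ι := (Fin k)ᵒᵈ) (hW ⊤).submodule_iSupIndep (A ⊤)
    · rw [Finset.sum_congr rfl fun j _ => by rw [hG_ne i hi j]]
      exact sum_finrank_inf_sup_iSup_lt_le (hW i).submodule_iSupIndep (A i)
  calc ∑ j, tensorSliceRank F (fun i => W i j) (Tc fun _ => j)
      ≤ ∑ j, ∑ i, finrank F ↥(W i j ⊓ G i j) := Finset.sum_le_sum fun j _ => hblock j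
    _ = ∑ i, ∑ j, finrank F ↥(W i j ⊓ G i j) := Finset.sum_comm
    _ ≤ ∑ i, finrank F (A i) := Finset.sum_le_sum fun i _ => hflag i
    _ ≤ tensorSliceRank F V T := hA

/-- Block upper triangular tensors: the slice rank is at least the sum of the slice ranks
of the diagonal blocks. -/
theorem sliceRank_blockTriangular {F : Type*} [Field F] {d k : ℕ} (hd : 2 ≤ d) (hk : 1 ≤ k)
    (V : Fin d → Type*)
    [∀ i, AddCommGroup (V i)] [∀ i, Module F (V i)] [∀ i, FiniteDimensional F (V i)]
    (W : ∀ i : Fin d, Fin k → Submodule F (V i))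
    (hW : ∀ i, DirectSum.IsInternal (W i))
    (T : ⨂[F] i, V i)
    (Tc : ∀ α : Fin d → Fin k, ⨂[F] i, (W i (α i)))
    (hdecomp : T = ∑ α : Fin d → Fin k,
      PiTensorProduct.map (fun i => (W i (α i)).subtype) (Tc α))
    (htri : ∀ α : Fin d → Fin k, ¬ Monotone α → Tc α = 0) :
    tensorSliceRank F V T ≥ ∑ j : Fin k, tensorSliceRank F (fun i => (W i j)) (Tc fun _ => j) :=
  sliceRank_blockTriangular_general hd V W hW T Tc hdecomp htri
end
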